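/- Fix σ̄ > 0, μ̄ ∈ ℝ, k ∈ ℕ, and C̄ > 0. For every s > 0 and all x > 0: C̄·x^k·g(x; μ̄, σ̄) ≤ C̃(s)·g(x; μ̃(s), σ̄), where g(x;μ,σ) is the Gaussian pdf, μ̃(s) = s − σ̄²·((s−μ̄)/σ̄² − k/s), and C̃(s) = C̄·exp(−(s−μ̄)²/(2σ̄²) + k·log s + (σ̄²/2)·((s−μ̄)/σ̄² − k/s)²). Moreover equality holds at x = s. -/

import Mathlib

noncomputable def gauss (μ σ x : ℝ) : ℝ :=
  (1 / Real.sqrt (2 * Real.pi * σ ^ 2)) * Real.exp (-(x - μ) ^ 2 / (2 * σ ^ 2))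

/-!
Write `x ^ k = exp (k log x)`. By concavity of `log`, `k log x` lies below its tangent line at `s`,
so `x ^ k g(x; μ, σ)` is bounded by `exp` of an affine function of `x` times `g(x; μ, σ)`, with
equality at `x = s`. Such an exponential tilt of a Gaussian density is again a Gaussian density
with the same variance, whose mean and normalising constant are found by completing the square.
-/

open Real

lemma gauss_nonneg (μ σ x : ℝ) : 0 ≤ gauss μ σ x := by
  unfold gauss
  positivity

lemma exp_affine_mul_gauss {σ : ℝ} (hσ : σ ≠ 0) (μ b d s x : ℝ) :
    exp (b + d * (x - s)) * gauss μ σ x =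
      exp (-(s - μ) ^ 2 / (2 * σ ^ 2) + b + (σ ^ 2 / 2) * ((s - μ) / σ ^ 2 - d) ^ 2) *
        gauss (s - σ ^ 2 * ((s - μ) / σ ^ 2 - d)) σ x := by
  have hexponent :
      b + d * (x - s) + -(x - μ) ^ 2 / (2 * σ ^ 2) =
        -(s - μ) ^ 2 / (2 * σ ^ 2) + b + (σ ^ 2 / 2) * ((s - μ) / σ ^ 2 - d) ^ 2 +
          -(x - (s - σ ^ 2 * ((s - μ) / σ ^ 2 - d))) ^ 2 / (2 * σ ^ 2) := by
    field_simp
    ring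
  simp only [gauss]
  rw [mul_left_comm, ← exp_add, hexponent, exp_add]
  ring

lemma pow_le_exp_tangent_log {s x : ℝ} (hs : 0 < s) (hx : 0 < x) (k : ℕ) :
    x ^ k ≤ exp (k * log s + k / s * (x - s)) := by
  have hlog : log x ≤ log s + (x - s) / s := by
    have := log_le_sub_one_of_pos (div_pos hx hs)
    rw [log_div hx.ne' hs.ne'] at this
    rw [sub_div, div_self hs.ne']
    linarith
  calc x ^ k = exp (k * log x) := by rw [exp_nat_mul, exp_log hx]
    _ ≤ exp (k * log s + k / s * (x - s)) := by
      gcongr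
      calc (k : ℝ) * log x ≤ k * (log s + (x - s) / s) := by gcongr
        _ = k * log s + k / s * (x - s) := by ring

theorem stmt16 (σ μ C : ℝ) (hσ : 0 < σ) (hC : 0 < C) (k : ℕ) (s : ℝ) (hs : 0 < s) :
    let μt : ℝ := s - σ ^ 2 * ((s - μ) / σ ^ 2 - (k : ℝ) / s)
    let Ct : ℝ := C * Real.exp (-(s - μ) ^ 2 / (2 * σ ^ 2) + (k : ℝ) * Real.log s
      + (σ ^ 2 / 2) * ((s - μ) / σ ^ 2 - (k : ℝ) / s) ^ 2)
    (∀ x > (0 : ℝ), C * x ^ k * gauss μ σ x ≤ Ct * gauss μt σ x) ∧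
    C * s ^ k * gauss μ σ s = Ct * gauss μt σ s := by
  intro μt Ct
  have htilt : ∀ x, C * exp (k * log s + k / s * (x - s)) * gauss μ σ x = Ct * gauss μt σ x :=
    fun x ↦ by rw [mul_assoc, exp_affine_mul_gauss hσ.ne', ← mul_assoc]
  refine ⟨fun x hx ↦ ?_, ?_⟩
  · rw [← htilt]
    gcongr
    · exact gauss_nonneg μ σ x
    · exact pow_le_exp_tangent_log hs hx k
  · rw [← htilt, sub_self, mul_zero, add_zero, exp_nat_mul, exp_log hs]
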